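/- Let X be a compact metric space and f : X → X continuous. If f has the weak asymptotic average shadowing property, then f has the almost asymptotic average shadowing property. -/

import Mathlib

open Filter Metric

open scoped Classical in
noncomputable def upperDens (A : Set ℕ) : ℝ :=
  Filter.limsup (fun n => (((Finset.range n).filter (· ∈ A)).card : ℝ) / n) Filter.atTop

open scoped Classical in
noncomputable def lowerDens (A : Set ℕ) : ℝ :=
  Filter.liminf (fun n => (((Finset.range n).filter (· ∈ A)).card : ℝ) / n) Filter.atTop

open scoped Classical in
def DensityZero (A : Set ℕ) : Prop :=
  Filter.Tendsto (fun n => (((Finset.range n).filter (· ∈ A)).card : ℝ) / n)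
    Filter.atTop (nhds 0)

noncomputable def cesaro (a : ℕ → ℝ) (n : ℕ) : ℝ := (∑ i ∈ Finset.range n, a i) / n

variable {X : Type*} [MetricSpace X]

def ErgodicPO (f : X → X) (δ : ℝ) (x : ℕ → X) : Prop :=
  DensityZero {j | δ ≤ dist (f (x j)) (x (j + 1))}

def AvgPO (f : X → X) (δ : ℝ) (x : ℕ → X) : Prop :=
  ∃ N : ℕ, 0 < N ∧ ∀ n ≥ N, ∀ k : ℕ,
    (∑ j ∈ Finset.range n, dist (f (x (j + k))) (x (j + k + 1))) / n < δ

def WeakAsympAvgPO (f : X → X) (δ : ℝ) (x : ℕ → X) : Prop :=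
  Filter.limsup (cesaro (fun j => dist (f (x j)) (x (j + 1)))) Filter.atTop < δ

def AsympAvgPO (f : X → X) (x : ℕ → X) : Prop :=
  Filter.Tendsto (cesaro (fun j => dist (f (x j)) (x (j + 1)))) Filter.atTop (nhds 0)

def ShadowAvg (f : X → X) (ε : ℝ) (z : X) (x : ℕ → X) : Prop :=
  Filter.limsup (cesaro (fun j => dist (f^[j] z) (x j))) Filter.atTop < ε

def MeanErgodicShadowing (f : X → X) : Prop :=
  ∀ ε > (0:ℝ), ∃ δ > (0:ℝ), ∀ x : ℕ → X, ErgodicPO f δ x → ∃ z, ShadowAvg f ε z x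

def AvgShadowing (f : X → X) : Prop :=
  ∀ ε > (0:ℝ), ∃ δ > (0:ℝ), ∀ x : ℕ → X, AvgPO f δ x → ∃ z, ShadowAvg f ε z x

def WeakAsympAvgShadowing (f : X → X) : Prop :=
  ∀ ε > (0:ℝ), ∀ x : ℕ → X, AsympAvgPO f x → ∃ z, ShadowAvg f ε z x

def AlmostAsympAvgShadowing (f : X → X) : Prop :=
  ∀ ε > (0:ℝ), ∃ δ > (0:ℝ), ∀ x : ℕ → X, WeakAsympAvgPO f δ x → ∃ z, ShadowAvg f ε z x

def AsympAvgShadowing (f : X → X) : Prop :=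
  ∀ x : ℕ → X, AsympAvgPO f x →
    ∃ z, Filter.Tendsto (cesaro (fun j => dist (f^[j] z) (x j))) Filter.atTop (nhds 0)

def MalphaShadowing (f : X → X) (α : ℝ) : Prop :=
  ∀ ε > (0:ℝ), ∃ δ > (0:ℝ), ∀ x : ℕ → X, ErgodicPO f δ x →
    ∃ z, α < lowerDens {j | dist (f^[j] z) (x j) < ε}


section Helpers

open Filter Metric

private lemma limsupA {u : ℕ → ℝ} {C : ℝ} (h0 : ∀ n, u n ≤ C) {c : ℝ}
    (h : Filter.limsup u Filter.atTop < c) : ∀ᶠ n in Filter.atTop, u n < c :=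
  Filter.eventually_lt_of_limsup_lt h ⟨C, Filter.eventually_map.2 (Filter.Eventually.of_forall h0)⟩

private lemma limsupB {u : ℕ → ℝ} (h0 : ∀ n, 0 ≤ u n) {ε : ℝ} (hε : 0 < ε)
    (h : ¬ Filter.limsup u Filter.atTop < ε) : ∀ L : ℕ, ∃ n, L ≤ n ∧ ε/2 < u n := by
  intro L
  by_contra hc
  push_neg at hc
  apply h
  have : Filter.limsup u Filter.atTop ≤ ε/2 := by
    refine Filter.limsup_le_of_le
      (Filter.isCoboundedUnder_le_of_eventually_le _ (Filter.Eventually.of_forall h0)) ?_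
    exact Filter.eventually_atTop.2 ⟨L, hc⟩
  linarith

private lemma cesaro_nonneg {a : ℕ → ℝ} (h : ∀ n, 0 ≤ a n) (n : ℕ) : 0 ≤ cesaro a n := by
  unfold cesaro
  have : 0 ≤ ∑ i ∈ Finset.range n, a i := Finset.sum_nonneg fun i _ => h i
  positivity

private lemma cesaro_le {a : ℕ → ℝ} {C : ℝ} (hC : 0 ≤ C) (h : ∀ n, a n ≤ C) (n : ℕ) :
    cesaro a n ≤ C := by
  unfold cesaro
  rcases Nat.eq_zero_or_pos n with rfl | hn
  · simpa using hC
  · rw [div_le_iff₀ (by positivity)]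
    calc ∑ i ∈ Finset.range n, a i ≤ ∑ _i ∈ Finset.range n, C :=
          Finset.sum_le_sum fun i _ => h i
      _ = C * n := by rw [Finset.sum_const, Finset.card_range, nsmul_eq_mul, mul_comm]

/-- uniform compactness lemma -/
private lemma uniformN {X : Type*} [MetricSpace X] [CompactSpace X] {f : X → X}
    (hf : Continuous f) {ε : ℝ} (w : ℕ → X)
    (hw : ∀ z : X, ∀ L : ℕ, ∃ n, L ≤ n ∧
      ε/2 * n < ∑ j ∈ Finset.range n, dist (f^[j] z) (w j)) (L : ℕ) :
    ∃ N, L ≤ N ∧ ∀ z : X, ∃ n, L ≤ n ∧ n ≤ N ∧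
      ε/2 * n ≤ ∑ j ∈ Finset.range n, dist (f^[j] z) (w j) := by
  set U : ℕ → Set X := fun n =>
    if L ≤ n then {z | ε/2 * n < ∑ j ∈ Finset.range n, dist (f^[j] z) (w j)} else ∅ with hU
  have hUyes : ∀ n, L ≤ n →
      U n = {z | ε/2 * n < ∑ j ∈ Finset.range n, dist (f^[j] z) (w j)} := by
    intro n hn; simp only [hU, if_pos hn]
  have hUno : ∀ n, ¬ L ≤ n → U n = ∅ := by
    intro n hn; simp only [hU, if_neg hn]
  have hopen : ∀ n, IsOpen (U n) := by
    intro n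
    by_cases hn : L ≤ n
    · rw [hUyes n hn]
      exact isOpen_lt continuous_const
        (continuous_finset_sum _ fun j _ => (hf.iterate j).dist continuous_const)
    · rw [hUno n hn]; exact isOpen_empty
  have hcov : (Set.univ : Set X) ⊆ ⋃ n, U n := by
    intro z _
    obtain ⟨n, hn1, hn2⟩ := hw z L
    refine Set.mem_iUnion.2 ⟨n, ?_⟩
    rw [hUyes n hn1]
    exact hn2
  obtain ⟨s, hs⟩ := isCompact_univ.elim_finite_subcover U hopen hcov
  refine ⟨L + s.sup id, Nat.le_add_right _ _, fun z => ?_⟩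
  obtain ⟨n, hns, hzn⟩ := Set.mem_iUnion₂.1 (hs (Set.mem_univ z))
  by_cases hLn : L ≤ n
  · rw [hUyes n hLn] at hzn
    exact ⟨n, hLn, le_trans (Finset.le_sup (f := id) hns) (Nat.le_add_left _ _), le_of_lt hzn⟩
  · rw [hUno n hLn] at hzn
    exact absurd hzn (Set.notMem_empty z)

end Helpers

set_option maxHeartbeats 3200000 in
theorem stmt14 {X : Type*} [MetricSpace X] [CompactSpace X] (f : X → X)
    (hf : Continuous f) (h : WeakAsympAvgShadowing f) : AlmostAsympAvgShadowing f := by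
  rcases isEmpty_or_nonempty X with hX | hX
  · intro ε hε
    exact ⟨1, one_pos, fun x _ => (IsEmpty.false (x 0)).elim⟩
  by_contra hcon
  unfold AlmostAsympAvgShadowing at hcon
  push_neg at hcon
  obtain ⟨ε, hε, hbad⟩ := hcon
  -- choose bad pseudo-orbits
  have hsel : ∀ k : ℕ, ∃ x : ℕ → X,
      WeakAsympAvgPO f (1/((k:ℝ)+1)) x ∧ ∀ z, ¬ ShadowAvg f ε z x := by
    intro k
    obtain ⟨x, hx1, hx2⟩ := hbad (1/((k:ℝ)+1)) (by positivity)
    exact ⟨x, hx1, hx2⟩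
  choose xs hxsW hxsB using hsel
  -- diameter bound
  obtain ⟨D, hD⟩ : ∃ D, ∀ p q : X, dist p q ≤ D := by
    obtain ⟨C, hC⟩ := Metric.isBounded_iff.1 (isCompact_univ (X := X)).isBounded
    exact ⟨C, fun p q => hC (Set.mem_univ p) (Set.mem_univ q)⟩
  have hD0 : 0 ≤ D := le_trans dist_nonneg (hD hX.some hX.some)
  set S : ℕ → ℕ → ℝ := fun k m => ∑ j ∈ Finset.range m, dist (f (xs k j)) (xs k (j+1)) with hSdef
  have hS0 : ∀ k m, 0 ≤ S k m := fun k m => Finset.sum_nonneg fun j _ => dist_nonneg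
  have hSmono : ∀ k, Monotone (S k) := by
    intro k m₁ m₂ hm
    exact Finset.sum_le_sum_of_subset_of_nonneg (Finset.range_subset_range.2 hm)
      (fun j _ _ => dist_nonneg)
  -- L k : threshold after which averages of xs k are small
  have hLsel : ∀ k : ℕ, ∃ L : ℕ, 1 ≤ L ∧ ∀ n, L ≤ n → S k n * ((k:ℝ)+1) ≤ n := by
    intro k
    have hev := limsupA (C := D)
      (fun n => cesaro_le hD0 (fun j => hD _ _) n) (hxsW k)
    obtain ⟨L, hL⟩ := Filter.eventually_atTop.1 hev
    refine ⟨max L 1, le_max_right _ _, fun n hn => ?_⟩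
    have hn1 : 1 ≤ n := le_trans (le_max_right _ _) hn
    have h2 := hL n (le_trans (le_max_left _ _) hn)
    have hnpos : (0:ℝ) < n := by exact_mod_cast hn1
    have h3 : S k n / n < 1/((k:ℝ)+1) := h2
    rw [div_lt_div_iff₀ hnpos (by positivity)] at h3
    linarith
  choose Lf hLf1 hLf2 using hLsel
  -- uniform escape times
  have hNsel : ∀ k L : ℕ, ∃ N, L ≤ N ∧ ∀ z : X, ∃ n, L ≤ n ∧ n ≤ N ∧
      ε/2 * n ≤ ∑ j ∈ Finset.range n, dist (f^[j] z) (xs k j) := by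
    intro k L
    refine uniformN hf (xs k) ?_ L
    intro z L'
    obtain ⟨n, hn1, hn2⟩ :=
      limsupB (cesaro_nonneg (a := fun j => dist (f^[j] z) (xs k j))
        (fun j => dist_nonneg)) hε (hxsB k z) L'
    refine ⟨n, hn1, ?_⟩
    have hnpos : 0 < n := by
      by_contra hc
      have : n = 0 := by omega
      subst this
      have : cesaro (fun j => dist (f^[j] z) (xs k j)) 0 = 0 := by
        simp [cesaro]
      rw [this] at hn2
      linarith
    have hnR : (0:ℝ) < n := by exact_mod_cast hnpos
    have := (lt_div_iff₀ hnR).1 (by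
      have : cesaro (fun j => dist (f^[j] z) (xs k j)) n
          = (∑ j ∈ Finset.range n, dist (f^[j] z) (xs k j)) / n := rfl
      rw [this] at hn2
      exact hn2)
    linarith
  choose Nf hNf1 hNf2 using hNsel
  -- the recursive construction
  set g : ℕ → ℕ × ℝ := fun k => Nat.rec ((0:ℕ), (0:ℝ))
    (fun k p => (p.1 + max (Nf k ((k+1) * p.1 + 1))
        (max (Lf k) ((k+1) * (⌈p.2⌉₊ + ⌈D⌉₊ + Lf (k+1) + 1))),
      p.2 + S k (max (Nf k ((k+1) * p.1 + 1))
        (max (Lf k) ((k+1) * (⌈p.2⌉₊ + ⌈D⌉₊ + Lf (k+1) + 1)))) + D)) k with hgdef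
  set t : ℕ → ℕ := fun k => (g k).1 with htdef
  set B : ℕ → ℝ := fun k => (g k).2 with hBdef
  set M : ℕ → ℕ := fun k => max (Nf k ((k+1) * t k + 1))
    (max (Lf k) ((k+1) * (⌈B k⌉₊ + ⌈D⌉₊ + Lf (k+1) + 1))) with hMdef
  have ht0 : t 0 = 0 := rfl
  have hB0 : B 0 = 0 := rfl
  have htS : ∀ k, t (k+1) = t k + M k := fun k => rfl
  have hBS : ∀ k, B (k+1) = B k + S k (M k) + D := fun k => rfl
  have hM_N : ∀ k, Nf k ((k+1) * t k + 1) ≤ M k := fun k => le_max_left _ _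
  have hM_L : ∀ k, Lf k ≤ M k := fun k => le_trans (le_max_left _ _) (le_max_right _ _)
  have hM_big : ∀ k, (k+1) * (⌈B k⌉₊ + ⌈D⌉₊ + Lf (k+1) + 1) ≤ M k :=
    fun k => le_trans (le_max_right _ _) (le_max_right _ _)
  have hM1 : ∀ k, 1 ≤ M k := by
    intro k
    refine le_trans ?_ (hM_big k)
    exact Nat.one_le_iff_ne_zero.2 (Nat.mul_ne_zero (by omega) (by omega))
  have htmono : StrictMono t := by
    apply strictMono_nat_of_lt_succ
    intro k
    have := hM1 k
    rw [htS k]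
    omega
  have htk : ∀ k, k ≤ t k := by
    intro k
    induction k with
    | zero => simp [ht0]
    | succ k ih => rw [htS k]; have := hM1 k; omega
  have hBnn : ∀ k, 0 ≤ B k := by
    intro k
    induction k with
    | zero => simp [hB0]
    | succ k ih => rw [hBS k]; have := hS0 k (M k); linarith
  -- the block index
  classical
  set blk : ℕ → ℕ := fun j => Nat.findGreatest (fun b => t b ≤ j) j with hblkdef
  have hblk1 : ∀ j, t (blk j) ≤ j := by
    intro j
    exact Nat.findGreatest_spec (P := fun b => t b ≤ j) (Nat.zero_le j)
      (by show t 0 ≤ j; rw [ht0]; omega)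
  have hblk2 : ∀ j, j < t (blk j + 1) := by
    intro j
    by_contra hc
    push_neg at hc
    have h1 : blk j + 1 ≤ j := le_trans (htk _) hc
    have h2 : blk j + 1 ≤ blk j := Nat.le_findGreatest (P := fun b => t b ≤ j) h1 hc
    omega
  have hblk_eq : ∀ k j, t k ≤ j → j < t (k+1) → blk j = k := by
    intro k j h1 h2
    have ha : blk j < k + 1 := htmono.lt_iff_lt.1 (lt_of_le_of_lt (hblk1 j) h2)
    have hb : k < blk j + 1 := htmono.lt_iff_lt.1 (lt_of_le_of_lt h1 (hblk2 j))
    omega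
  -- the glued sequence
  set y : ℕ → X := fun j => xs (blk j) (j - t (blk j)) with hydef
  have hy_eq : ∀ k j, j < M k → y (t k + j) = xs k j := by
    intro k j hj
    have hb : blk (t k + j) = k :=
      hblk_eq k (t k + j) (Nat.le_add_right _ _) (by rw [htS k]; omega)
    rw [hydef]
    simp only [hb, Nat.add_sub_cancel_left]
  -- error sums of y over blocks
  have key : ∀ k, ∀ n, t k ≤ n → n < t (k+1) →
      (∑ j ∈ Finset.range n, dist (f (y j)) (y (j+1))) ≤ B k + S k (n - t k) := by
    intro k
    induction k with
    | zero =>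
      intro n hn1 hn2
      rw [hB0, ht0]
      have hnM : n < M 0 := by rw [htS 0, ht0] at hn2; omega
      have heq : ∀ j ∈ Finset.range n,
          dist (f (y j)) (y (j+1)) = dist (f (xs 0 j)) (xs 0 (j+1)) := by
        intro j hj
        rw [Finset.mem_range] at hj
        have e1 : y j = xs 0 j := by
          have := hy_eq 0 j (by omega)
          rwa [ht0, Nat.zero_add] at this
        have e2 : y (j+1) = xs 0 (j+1) := by
          have := hy_eq 0 (j+1) (by omega)
          rwa [ht0, Nat.zero_add] at this
        rw [e1, e2]
      rw [Finset.sum_congr rfl heq]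
      simp [hSdef]
    | succ k ih =>
      intro n hn1 hn2
      have hT1 : 1 ≤ t (k+1) := le_trans (by omega) (htk (k+1))
      have hsplit : (∑ j ∈ Finset.range n, dist (f (y j)) (y (j+1)))
          = (∑ j ∈ Finset.range (t (k+1)), dist (f (y j)) (y (j+1)))
            + ∑ j ∈ Finset.Ico (t (k+1)) n, dist (f (y j)) (y (j+1)) := by
        rw [Finset.range_eq_Ico, Finset.range_eq_Ico, Finset.sum_Ico_consecutive _ (Nat.zero_le _) hn1]
      -- first part bounded by B (k+1)
      have hfirst : (∑ j ∈ Finset.range (t (k+1)), dist (f (y j)) (y (j+1))) ≤ B (k+1) := by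
        have hTm : t (k+1) = (t (k+1) - 1) + 1 := by omega
        rw [hTm, Finset.sum_range_succ]
        have hin : t k ≤ t (k+1) - 1 := by
          have := hM1 k
          rw [htS k]; omega
        have hin2 : t (k+1) - 1 < t (k+1) := by omega
        have hih := ih (t (k+1) - 1) hin hin2
        have hSle : S k (t (k+1) - 1 - t k) ≤ S k (M k) := by
          apply hSmono
          rw [htS k]; omega
        have hlast : dist (f (y (t (k+1) - 1))) (y (t (k+1) - 1 + 1)) ≤ D := hD _ _
        rw [hBS k]
        linarith
      -- second part equals S (k+1) (n - t (k+1))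
      have hsecond : (∑ j ∈ Finset.Ico (t (k+1)) n, dist (f (y j)) (y (j+1)))
          = S (k+1) (n - t (k+1)) := by
        rw [Finset.sum_Ico_eq_sum_range]
        apply Finset.sum_congr rfl
        intro i hi
        rw [Finset.mem_range] at hi
        have hiM : i < M (k+1) := by
          have := htS (k+1)
          omega
        have hiM2 : i + 1 < M (k+1) ∨ i + 1 = M (k+1) ∨ i + 1 < M (k+1) + 1 := by omega
        have e1 : y (t (k+1) + i) = xs (k+1) i := hy_eq (k+1) i hiM
        have e2 : y (t (k+1) + i + 1) = xs (k+1) (i+1) := by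
          have hi1 : i + 1 < M (k+1) := by
            have h5 := htS (k+1)
            omega
          have := hy_eq (k+1) (i+1) hi1
          rwa [← Nat.add_assoc] at this
        rw [e1] at *
        rw [e2]
      rw [hsplit, hsecond]
      linarith
  -- the quantitative bound: in block i+1 the average error is ≤ 4/(i+1)
  have bound4 : ∀ i n, t (i+1) ≤ n → n < t (i+2) →
      (∑ j ∈ Finset.range n, dist (f (y j)) (y (j+1))) * ((i:ℝ)+1) ≤ 4 * n := by
    intro i n hn1 hn2
    have hkey := key (i+1) n hn1 hn2
    set Se := ∑ j ∈ Finset.range n, dist (f (y j)) (y (j+1)) with hSe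
    have hSe0 : 0 ≤ Se := Finset.sum_nonneg fun j _ => dist_nonneg
    -- notations
    have hs : S i (M i) * ((i:ℝ)+1) ≤ (M i : ℝ) := hLf2 i (M i) (hM_L i)
    -- S2 bound
    set m2 := max (n - t (i+1)) (Lf (i+1)) with hm2
    have hS2a : S (i+1) (n - t (i+1)) ≤ S (i+1) m2 := hSmono _ (le_max_left _ _)
    have hS2b : S (i+1) m2 * ((i:ℝ)+1+1) ≤ (m2 : ℝ) := by
      have := hLf2 (i+1) m2 (le_max_right _ _)
      push_cast at this ⊢
      linarith
    have hm2le : (m2 : ℝ) ≤ (n : ℝ) + (Lf (i+1) : ℝ) := by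
      have : m2 ≤ (n - t (i+1)) + Lf (i+1) := max_le (Nat.le_add_right _ _) (Nat.le_add_left _ _)
      have h7 : ((n : ℕ) - t (i+1) : ℕ) ≤ n := Nat.sub_le _ _
      have := le_trans this (Nat.add_le_add_right h7 _)
      exact_mod_cast this
    -- M i big
    have hmB : ((i:ℝ)+1) * (B i + D + (Lf (i+1) : ℝ)) ≤ (M i : ℝ) := by
      have h8 := hM_big i
      have h9 : ((i+1 : ℕ) : ℝ) * ((⌈B i⌉₊ : ℝ) + (⌈D⌉₊ : ℝ) + (Lf (i+1) : ℝ) + 1)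
          ≤ (M i : ℝ) := by exact_mod_cast h8
      have h10 : B i ≤ (⌈B i⌉₊ : ℝ) := Nat.le_ceil _
      have h11 : D ≤ (⌈D⌉₊ : ℝ) := Nat.le_ceil _
      push_cast at h9
      have h12 : B i + D + ((Lf (i+1) : ℕ) : ℝ)
          ≤ (⌈B i⌉₊ : ℝ) + (⌈D⌉₊ : ℝ) + ((Lf (i+1) : ℕ) : ℝ) + 1 := by linarith
      calc ((i:ℝ)+1) * (B i + D + ((Lf (i+1) : ℕ) : ℝ))
          ≤ ((i:ℝ)+1) * ((⌈B i⌉₊ : ℝ) + (⌈D⌉₊ : ℝ) + ((Lf (i+1) : ℕ) : ℝ) + 1) :=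
            mul_le_mul_of_nonneg_left h12 (by positivity)
        _ ≤ (M i : ℝ) := h9
    have hmn : (M i : ℝ) ≤ (n : ℝ) := by
      have : M i ≤ n := by
        have := htS i
        omega
      exact_mod_cast this
    have hi0 : (0:ℝ) ≤ (i:ℝ) := Nat.cast_nonneg i
    have hL20 : (0:ℝ) ≤ ((Lf (i+1) : ℕ) : ℝ) := Nat.cast_nonneg _
    have hS20 : 0 ≤ S (i+1) (n - t (i+1)) := hS0 _ _
    have hsi0 : 0 ≤ S i (M i) := hS0 _ _
    have hkey2 : Se ≤ B i + S i (M i) + D + S (i+1) (n - t (i+1)) := by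
      rw [hBS i] at hkey
      linarith
    have hP1 : Se * ((i:ℝ)+1)
        ≤ (B i + S i (M i) + D + S (i+1) (n - t (i+1))) * ((i:ℝ)+1) :=
      mul_le_mul_of_nonneg_right hkey2 (by positivity)
    have hS2 : S (i+1) (n - t (i+1)) * ((i:ℝ)+1+1) ≤ (n : ℝ) + ((Lf (i+1) : ℕ) : ℝ) := by
      have := mul_le_mul_of_nonneg_right hS2a (by positivity : (0:ℝ) ≤ (i:ℝ)+1+1)
      linarith
    have e1 : (B i + S i (M i) + D + S (i+1) (n - t (i+1))) * ((i:ℝ)+1)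
        = (B i + D) * ((i:ℝ)+1) + S i (M i) * ((i:ℝ)+1)
          + S (i+1) (n - t (i+1)) * ((i:ℝ)+1) := by ring
    have e2 : S (i+1) (n - t (i+1)) * ((i:ℝ)+1)
        ≤ S (i+1) (n - t (i+1)) * ((i:ℝ)+1+1) := by nlinarith
    have e3 : (B i + D) * ((i:ℝ)+1) + ((Lf (i+1) : ℕ) : ℝ)
        ≤ ((i:ℝ)+1) * (B i + D + ((Lf (i+1) : ℕ) : ℝ)) := by nlinarith
    have e4 : (0:ℝ) ≤ (n : ℝ) := Nat.cast_nonneg n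
    linarith
    -- y is an asymptotic average pseudo-orbit
  have hAAPO : AsympAvgPO f y := by
    refine Metric.tendsto_atTop.2 ?_
    intro c hc
    obtain ⟨K, hK⟩ := exists_nat_gt (4 / c)
    refine ⟨t (K+1), fun n hn => ?_⟩
    have hbn1 : t (blk n) ≤ n := hblk1 n
    have hbn2 : n < t (blk n + 1) := hblk2 n
    have hKi : K + 1 ≤ blk n := by
      have h1 : t (K+1) < t (blk n + 1) := lt_of_le_of_lt hn hbn2
      have h2 : K + 1 < blk n + 1 := htmono.lt_iff_lt.1 h1
      omega
    obtain ⟨i, hi⟩ : ∃ i, blk n = i + 1 := ⟨blk n - 1, by omega⟩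
    rw [hi] at hbn1 hbn2
    have hb := bound4 i n hbn1 hbn2
    have hn1 : 1 ≤ n := le_trans (le_trans (by omega : 1 ≤ K+1) (htk (K+1))) hn
    have hnR : (0:ℝ) < n := by exact_mod_cast hn1
    have hiR : (0:ℝ) < (i:ℝ) + 1 := by positivity
    have hval : cesaro (fun j => dist (f (y j)) (y (j+1))) n
        = (∑ j ∈ Finset.range n, dist (f (y j)) (y (j+1))) / n := rfl
    have hSn0 : 0 ≤ ∑ j ∈ Finset.range n, dist (f (y j)) (y (j+1)) :=
      Finset.sum_nonneg fun j _ => dist_nonneg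
    rw [Real.dist_eq, hval, sub_zero, abs_of_nonneg (by positivity), div_lt_iff₀ hnR]
    have hKc : 4 / c < (K:ℝ) := hK
    have hiK : (K:ℝ) ≤ (i:ℝ) + 1 := by exact_mod_cast (by omega : K ≤ i + 1)
    have h4 : (4:ℝ) < c * ((i:ℝ)+1) := by
      have h4' : 4 / c < (i:ℝ) + 1 := lt_of_lt_of_le hKc hiK
      rw [div_lt_iff₀ hc] at h4'
      nlinarith
    nlinarith [hb]
  -- shadow y on average with ε/4 and derive a contradiction
  obtain ⟨z, hz⟩ := h (ε/4) (by positivity) y hAAPO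
  have hzev := limsupA (C := D)
    (fun n => cesaro_le (a := fun j => dist (f^[j] z) (y j)) hD0 (fun j => hD _ _) n) hz
  obtain ⟨N₀, hN₀⟩ := Filter.eventually_atTop.1 hzev
  obtain ⟨n, hn1, hn2, hn3⟩ := hNf2 N₀ ((N₀+1) * t N₀ + 1) (f^[t N₀] z)
  have hnM : n ≤ M N₀ := le_trans hn2 (hM_N N₀)
  have htn : t N₀ ≤ n := by
    have h1 : t N₀ ≤ (N₀+1) * t N₀ := Nat.le_mul_of_pos_left _ (by omega)
    omega
  have hn0 : 1 ≤ n := by omega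
  -- rewrite the sum along the orbit of z
  have hrw : (∑ j ∈ Finset.range n, dist (f^[j] (f^[t N₀] z)) (xs N₀ j))
      = ∑ j ∈ Finset.range n, dist (f^[t N₀ + j] z) (y (t N₀ + j)) := by
    apply Finset.sum_congr rfl
    intro j hj
    rw [Finset.mem_range] at hj
    rw [← Function.iterate_add_apply, hy_eq N₀ j (lt_of_lt_of_le hj hnM), Nat.add_comm]
  have hdec : (∑ j ∈ Finset.range (t N₀ + n), dist (f^[j] z) (y j))
      = (∑ j ∈ Finset.range (t N₀), dist (f^[j] z) (y j))
        + ∑ j ∈ Finset.Ico (t N₀) (t N₀ + n), dist (f^[j] z) (y j) := by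
    rw [Finset.range_eq_Ico, Finset.range_eq_Ico, Finset.sum_Ico_consecutive _ (Nat.zero_le _) (Nat.le_add_right _ _)]
  have hIco : (∑ j ∈ Finset.Ico (t N₀) (t N₀ + n), dist (f^[j] z) (y j))
      = ∑ i ∈ Finset.range n, dist (f^[t N₀ + i] z) (y (t N₀ + i)) := by
    rw [Finset.sum_Ico_eq_sum_range, Nat.add_sub_cancel_left]
  have hsum : (∑ j ∈ Finset.range n, dist (f^[t N₀ + j] z) (y (t N₀ + j)))
      ≤ ∑ j ∈ Finset.range (t N₀ + n), dist (f^[j] z) (y j) := by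
    rw [hdec, hIco]
    have : 0 ≤ ∑ j ∈ Finset.range (t N₀), dist (f^[j] z) (y j) :=
      Finset.sum_nonneg fun j _ => dist_nonneg
    linarith
  have hNuse := hN₀ (t N₀ + n) (by have := htk N₀; omega)
  have hpos : (0:ℝ) < ((t N₀ + n : ℕ) : ℝ) := by exact_mod_cast (by omega : 0 < t N₀ + n)
  have h6 : (∑ j ∈ Finset.range (t N₀ + n), dist (f^[j] z) (y j))
      < ε/4 * ((t N₀ : ℝ) + n) := by
    have hval : cesaro (fun j => dist (f^[j] z) (y j)) (t N₀ + n)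
        = (∑ j ∈ Finset.range (t N₀ + n), dist (f^[j] z) (y j)) / ((t N₀ + n : ℕ) : ℝ) := rfl
    rw [hval, div_lt_iff₀ hpos] at hNuse
    have hcast : ((t N₀ + n : ℕ) : ℝ) = (t N₀ : ℝ) + n := by push_cast; ring
    rw [hcast] at hNuse
    linarith
  have h8 : ((t N₀ : ℝ) + n) ≤ (n : ℝ) + n := by
    have : (t N₀ : ℝ) ≤ (n : ℝ) := by exact_mod_cast htn
    linarith
  rw [hrw] at hn3
  have : ε/2 * (n:ℝ) < ε/2 * (n:ℝ) := by
    calc ε/2 * (n:ℝ) ≤ ∑ j ∈ Finset.range n, dist (f^[t N₀ + j] z) (y (t N₀ + j)) := hn3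
      _ ≤ ∑ j ∈ Finset.range (t N₀ + n), dist (f^[j] z) (y j) := hsum
      _ < ε/4 * ((t N₀ : ℝ) + n) := h6
      _ ≤ ε/4 * ((n : ℝ) + n) := by nlinarith
      _ = ε/2 * (n:ℝ) := by ring
  exact absurd this (lt_irrefl _)
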